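/- Let (M, g) be a Riemannian manifold, X a vector field, and ω a parallel p-form (p ≥ 1). Then Δ(ι(X)ω) = ι(ΔX)ω, where Δ denotes the Hodge Laplacian dd* + d*d acting on forms (with X identified with a 1-form via g). -/

import Mathlib

/- An algebraic (Koszul-style) model of a Riemannian manifold: the commutative
`ℝ`-algebra `A` plays the role of the ring of smooth functions, derivations of
`A` play the role of vector fields, `g` is the Riemannian metric, `nab` the
Levi-Civita connection (`A`-linear in the first slot, a derivation in the
second, metric and torsion-free), `e` a (local) orthonormal frame, and
`k`-forms are alternating `A`-multilinear functions
`(Fin k → Derivation ℝ A A) → A`. -/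

namespace RiemannModel

variable {A : Type*} [CommRing A] [Algebra ℝ A]

abbrev Forms (A : Type*) [CommRing A] [Algebra ℝ A] (k : ℕ) : Type _ :=
  (Fin k → Derivation ℝ A A) → A

variable (nab : Derivation ℝ A A → Derivation ℝ A A → Derivation ℝ A A)
variable (g : Derivation ℝ A A → Derivation ℝ A A → A)
variable {n : ℕ} (e : Fin n → Derivation ℝ A A)

/-- covariant derivative of a `k`-form -/
def covD {k : ℕ} (Y : Derivation ℝ A A) (ω : Forms A k) : Forms A k :=
  fun Z => Y (ω Z) - ∑ i, ω (Function.update Z i (nab Y (Z i)))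

/-- interior multiplication of a `(k+1)`-form with a vector field -/
def contr {k : ℕ} (X : Derivation ℝ A A) (ω : Forms A (k + 1)) : Forms A k :=
  fun Z => ω (Fin.cons X Z)

/-- exterior derivative (via the torsion-free connection `nab`) -/
def extd {k : ℕ} (ω : Forms A k) : Forms A (k + 1) :=
  fun Z => ∑ i : Fin (k + 1), (-1 : A) ^ (i : ℕ) * covD nab (Z i) ω (Z ∘ i.succAbove)

/-- codifferential `d*ω = -∑ᵢ ι(eᵢ)∇_{eᵢ}ω` on `(k+1)`-forms -/
def codiffS {k : ℕ} (ω : Forms A (k + 1)) : Forms A k :=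
  -(∑ i, contr (e i) (covD nab (e i) ω))

/-- curvature operator on forms -/
def Rform {k : ℕ} (X Y : Derivation ℝ A A) (ω : Forms A k) : Forms A k :=
  covD nab X (covD nab Y ω) - covD nab Y (covD nab X ω) - covD nab ⁅X, Y⁆ ω

/-- curvature operator on vector fields -/
def Rvec (X Y Z : Derivation ℝ A A) : Derivation ℝ A A :=
  nab X (nab Y Z) - nab Y (nab X Z) - nab ⁅X, Y⁆ Z

/-- the Ricci endomorphism `Ric(X) = ∑ᵢ R(X, eᵢ)eᵢ` -/
def ricci (X : Derivation ℝ A A) : Derivation ℝ A A :=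
  ∑ i, Rvec nab X (e i) (e i)

/-- the metric dual `1`-form of a vector field -/
def flat (X : Derivation ℝ A A) : Forms A 1 := fun Z => g X (Z 0)

/-- wedge product of a `1`-form with a `k`-form -/
def wedge1 {k : ℕ} (α : Forms A 1) (ω : Forms A k) : Forms A (k + 1) :=
  fun Z => ∑ i : Fin (k + 1), (-1 : A) ^ (i : ℕ) * α (fun _ => Z i) * ω (Z ∘ i.succAbove)

/-- gradient -/
def grad (f : A) : Derivation ℝ A A := ∑ i, (e i) f • e i

/-- Laplacian on functions, `Δ f = -tr Hess f` -/
def lapl (f : A) : A := -(∑ i, ((e i) ((e i) f) - (nab (e i) (e i)) f))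

/-- musical isomorphism: vector field associated to a `1`-form -/
def sharp (α : Forms A 1) : Derivation ℝ A A := ∑ i, α (fun _ => e i) • e i

/-- pointwise inner product of `k`-forms -/
noncomputable def finner {k : ℕ} (ω η : Forms A k) : A :=
  algebraMap ℝ A (1 / (Nat.factorial k : ℝ)) *
    ∑ z : Fin k → Fin n, ω (fun a => e (z a)) * η (fun a => e (z a))

/-- auxiliary: `Y♭ ∧ d*η` (zero on `0`-forms, where `d* = 0`) -/
def wedgeCod : ∀ {k : ℕ}, Forms A k → Derivation ℝ A A → Forms A k
  | 0, _, _ => 0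
  | _ + 1, η, Y => wedge1 (flat g Y) (codiffS nab e η)

/-- the `T^{k,1}`-component of the covariant derivative of a `k`-form:
`T(η)(Y) = ∇_Y η - (1/(k+1)) ι(Y)(dη) + (1/(n-k+1)) Y♭ ∧ d*η` -/
noncomputable def Tform {k : ℕ} (η : Forms A k) (Y : Derivation ℝ A A) : Forms A k :=
  covD nab Y η - algebraMap ℝ A (1 / ((k : ℝ) + 1)) • contr Y (extd nab η) +
    algebraMap ℝ A (1 / ((n : ℝ) - k + 1)) • wedgeCod nab g e η Y

/-- Hodge Laplacian `Δ = d d* + d* d` -/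
def hodgeLap : ∀ {k : ℕ}, Forms A k → Forms A k
  | 0, ω => codiffS nab e (extd nab ω)
  | _ + 1, ω => codiffS nab e (extd nab ω) + extd nab (codiffS nab e ω)

/-- the Weitzenböck curvature operator `ℛ_k` -/
def Rcal : ∀ {k : ℕ}, Forms A k → Forms A k
  | 0, _ => 0
  | _ + 1, η =>
    -(∑ i, ∑ j, wedge1 (flat g (e i)) (contr (e j) (Rform nab (e i) (e j) η)))

/-!
Since `ω` is parallel, `∇_Y (ι_V ω) = ι_{∇_Y V} ω`: every covariant derivative of `ι_X ω` falls
on `X`. Writing `d` and `d*` through `∇` and using that `ω` is alternating, `d* d (ι_X ω)` and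
`d d* (ι_X ω)` become contractions of `ω` with second covariant derivatives `∇²X`; their sum is
`ι_{∇*∇ X} ω` plus a term built from `∇²_{V,eᵢ} X - ∇²_{eᵢ,V} X = R(V, eᵢ) X`. A parallel form is
annihilated by every curvature operator `R(Y, W)`; together with the pair symmetry of the
curvature tensor this turns that term into `ι_{Ric X} ω`. The same computation for `X♭` is the
Bochner formula `Δ X♭ = (∇*∇ X + Ric X)♭`.
-/

open Function

section SlotDeriv

variable {ι M N : Type*} [Fintype ι]

/-- `F` acting on multi-argument functions as a derivation, up to sign:
`covD nab Y ω = Y ∘ ω - slotDeriv (nab Y) ω`. -/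
def slotDeriv [DecidableEq ι] [AddCommMonoid N] (F : M → M) (ω : (ι → M) → N) : (ι → M) → N :=
  fun Z => ∑ k, ω (update Z k (F (Z k)))

theorem sum_sum_sub_sum_sum_of_offDiag [AddCommGroup N] (f h : ι → ι → N)
    (hoff : ∀ k m, k ≠ m → f k m = h m k) :
    ∑ k, ∑ m, f k m - ∑ k, ∑ m, h k m = ∑ k, (f k k - h k k) := by
  rw [Finset.sum_comm (f := h), ← Finset.sum_sub_distrib]
  refine Finset.sum_congr rfl fun k _ => ?_
  rw [← Finset.sum_sub_distrib]
  exact Finset.sum_eq_single k (fun m _ hm => by rw [hoff k m (Ne.symm hm), sub_self])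
    (fun hk => absurd (Finset.mem_univ k) hk)

variable [DecidableEq ι] {R : Type*} [Ring R] [AddCommGroup M] [Module R M] [AddCommGroup N]
  [Module R N] (Ω : MultilinearMap R (fun _ : ι => M) N)

theorem slotDeriv_sub (F G : M → M) (Z : ι → M) :
    slotDeriv (fun V => F V - G V) Ω Z = slotDeriv F Ω Z - slotDeriv G Ω Z := by
  simp only [slotDeriv, Ω.map_update_sub, Finset.sum_sub_distrib]

theorem slotDeriv_slotDeriv_sub_comm (F G : M → M) (Z : ι → M) :
    slotDeriv G (slotDeriv F Ω) Z - slotDeriv F (slotDeriv G Ω) Z =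
      slotDeriv (fun V => F (G V) - G (F V)) Ω Z := by
  simp only [slotDeriv]
  rw [sum_sum_sub_sum_sum_of_offDiag]
  · simp only [update_self, update_idem, Ω.map_update_sub]
  · intro k m hkm
    rw [update_of_ne hkm.symm, update_of_ne hkm, update_comm hkm]

end SlotDeriv

theorem sum_frame_transpose {R M N : Type*} [CommSemiring R] [AddCommMonoid M] [Module R M]
    [AddCommMonoid N] [Module R N] {n : ℕ} {g : M → M → R} {e : Fin n → M}
    (he : ∀ X, X = ∑ i, g X (e i) • e i) (B : M →ₗ[R] M →ₗ[R] N) {v w : Fin n → M}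
    (hvw : ∀ i j, g (v i) (e j) = g (w j) (e i)) :
    ∑ i, B (e i) (v i) = ∑ j, B (w j) (e j) := by
  calc ∑ i, B (e i) (v i)
      = ∑ i, ∑ j, g (v i) (e j) • B (e i) (e j) := by
        refine Finset.sum_congr rfl fun i _ => ?_
        conv_lhs => rw [he (v i)]
        simp only [map_sum, map_smul]
    _ = ∑ j, ∑ i, g (w j) (e i) • B (e i) (e j) := by
        rw [Finset.sum_comm]
        simp only [hvw]
    _ = ∑ j, B (w j) (e j) := by
        refine Finset.sum_congr rfl fun j _ => ?_
        conv_rhs => rw [he (w j)]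
        simp only [map_sum, map_smul, LinearMap.sum_apply, LinearMap.smul_apply]

section Alternating

variable {R M : Type*} [CommRing R] [AddCommGroup M] [Module R M] {k : ℕ}

theorem map_update_eq_neg_one_pow_mul_cons (Ω : M [⋀^Fin (k + 1)]→ₗ[R] R) (Z : Fin (k + 1) → M)
    (m : Fin (k + 1)) (w : M) :
    Ω (update Z m w) = (-1) ^ (m : ℕ) * Ω (Fin.cons w (Z ∘ m.succAbove)) := by
  rw [← Fin.insertNth_removeNth, Ω.map_insertNth, zsmul_eq_mul]
  push_cast
  rfl

theorem map_cons_update_swap (Ω : M [⋀^Fin (k + 1)]→ₗ[R] R) (Z : Fin k → M) (m : Fin k)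
    (u v : M) : Ω (Fin.cons u (update Z m v)) = -Ω (Fin.cons v (update Z m u)) := by
  have hswap : Fin.cons v (update Z m u) = Fin.cons u (update Z m v) ∘ Equiv.swap 0 m.succ := by
    funext x
    rcases eq_or_ne x 0 with rfl | hx0
    · rw [comp_apply, Equiv.swap_apply_left, Fin.cons_zero, Fin.cons_succ, update_self]
    rcases eq_or_ne x m.succ with rfl | hxm
    · rw [comp_apply, Equiv.swap_apply_right, Fin.cons_succ, update_self, Fin.cons_zero]
    obtain ⟨j, rfl⟩ := Fin.exists_succ_eq_of_ne_zero hx0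
    have hjm : j ≠ m := fun h => hxm (h ▸ rfl)
    rw [comp_apply, Equiv.swap_apply_of_ne_of_ne hx0 hxm, Fin.cons_succ, Fin.cons_succ,
      update_of_ne hjm, update_of_ne hjm]
  rw [hswap, Ω.map_swap _ (Fin.succ_ne_zero m).symm, neg_neg]

theorem map_cons_cons_swap (Ω : M [⋀^Fin (k + 2)]→ₗ[R] R) (Z : Fin k → M) (u v : M) :
    Ω (Fin.cons u (Fin.cons v Z)) = -Ω (Fin.cons v (Fin.cons u Z)) := by
  simpa only [Fin.update_cons_zero] using map_cons_update_swap Ω (Fin.cons u Z) 0 u v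

def consLin (Ω : M [⋀^Fin (k + 1)]→ₗ[R] R) (Z : Fin k → M) : M →ₗ[R] R where
  toFun V := Ω (Fin.cons V Z)
  map_add' := Ω.cons_add Z
  map_smul' := Ω.cons_smul Z

def consUpdateBilin (Ω : M [⋀^Fin (k + 1)]→ₗ[R] R) (Z : Fin k → M) (m : Fin k) :
    M →ₗ[R] M →ₗ[R] R :=
  LinearMap.mk₂ R (fun u v => Ω (Fin.cons u (update Z m v)))
    (fun u u' v => Ω.cons_add _ u u') (fun c u v => Ω.cons_smul _ c u)
    (fun u v v' => by simp only [Fin.cons_update, Ω.map_update_add])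
    (fun c u v => by simp only [Fin.cons_update, Ω.map_update_smul])

end Alternating

local notation "𝔛" => Derivation ℝ A A

structure IsMetric : Prop where
  symm (X Y : 𝔛) : g X Y = g Y X
  add_left (X Y Z : 𝔛) : g (X + Y) Z = g X Z + g Y Z
  smul_left (a : A) (X Y : 𝔛) : g (a • X) Y = a * g X Y

structure IsLeviCivita : Prop where
  add_left (X Y Z : 𝔛) : nab (X + Y) Z = nab X Z + nab Y Z
  smul_left (a : A) (X Y : 𝔛) : nab (a • X) Y = a • nab X Y
  add_right (X Y Z : 𝔛) : nab X (Y + Z) = nab X Y + nab X Z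
  metric (X Y Z : 𝔛) : X (g Y Z) = g (nab X Y) Z + g Y (nab X Z)
  torsion (X Y : 𝔛) : nab X Y - nab Y X = ⁅X, Y⁆

structure IsOrthonormalFrame : Prop where
  orth (i j : Fin n) : g (e i) (e j) = if i = j then 1 else 0
  expand (X : 𝔛) : X = ∑ i, g X (e i) • e i

def nab2 (Y W X : 𝔛) : 𝔛 := nab Y (nab W X) - nab (nab Y W) X

def roughLap (X : 𝔛) : 𝔛 := -∑ i, nab2 nab (e i) (e i) X

variable {nab g e}

namespace IsMetric

variable (hg : IsMetric g)
include hg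

def bilin : 𝔛 →ₗ[A] 𝔛 →ₗ[A] A :=
  LinearMap.mk₂ A g hg.add_left hg.smul_left
    (fun X Y Z => by rw [hg.symm, hg.add_left, hg.symm Y, hg.symm Z])
    (fun a X Y => by rw [hg.symm, hg.smul_left, hg.symm, smul_eq_mul])

theorem zero_left (Y : 𝔛) : g 0 Y = 0 := hg.bilin.map_zero₂ Y

theorem neg_left (X Y : 𝔛) : g (-X) Y = -g X Y := hg.bilin.map_neg₂ X Y

theorem sub_left (X Y Z : 𝔛) : g (X - Y) Z = g X Z - g Y Z := hg.bilin.map_sub₂ X Y Z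

theorem sum_left {ι : Type*} (s : Finset ι) (X : ι → 𝔛) (Y : 𝔛) :
    g (∑ i ∈ s, X i) Y = ∑ i ∈ s, g (X i) Y :=
  hg.bilin.map_sum₂ s X Y

end IsMetric

namespace IsLeviCivita

variable (hnab : IsLeviCivita nab g)
include hnab

def nabLeft (X : 𝔛) : 𝔛 →ₗ[A] 𝔛 where
  toFun Y := nab Y X
  map_add' Y Y' := hnab.add_left Y Y' X
  map_smul' a Y := hnab.smul_left a Y X

@[simp]
theorem nabLeft_apply (X Y : 𝔛) : hnab.nabLeft X Y = nab Y X := rfl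

theorem neg_left (X Y : 𝔛) : nab (-X) Y = -nab X Y := (hnab.nabLeft Y).map_neg X

theorem sub_left (X Y Z : 𝔛) : nab (X - Y) Z = nab X Z - nab Y Z := (hnab.nabLeft Z).map_sub X Y

theorem sub_right (X Y Z : 𝔛) : nab X (Y - Z) = nab X Y - nab X Z :=
  (AddMonoidHom.mk' (nab X) (hnab.add_right X)).map_sub Y Z

end IsLeviCivita

section Curvature

variable (hnab : IsLeviCivita nab g)
include hnab

theorem nab2_sub_nab2_swap (Y W X : 𝔛) : nab2 nab Y W X - nab2 nab W Y X = Rvec nab Y W X := by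
  simp only [nab2, Rvec]
  rw [← hnab.torsion Y W, hnab.sub_left]
  abel

theorem Rvec_antisymm (X Y Z : 𝔛) : Rvec nab X Y Z = -Rvec nab Y X Z := by
  simp only [Rvec, ← lie_skew X Y, hnab.neg_left]
  abel

theorem Rvec_bianchi (X Y Z : 𝔛) : Rvec nab X Y Z + Rvec nab Y Z X + Rvec nab Z X Y = 0 := by
  have hlie : ∀ a b c : 𝔛, nab a (nab b c) - nab a (nab c b) = nab a ⁅b, c⁆ := fun a b c => by
    rw [← hnab.torsion, hnab.sub_right]
  calc Rvec nab X Y Z + Rvec nab Y Z X + Rvec nab Z X Y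
      = (nab X ⁅Y, Z⁆ - nab ⁅Y, Z⁆ X) + (nab Y ⁅Z, X⁆ - nab ⁅Z, X⁆ Y) +
          (nab Z ⁅X, Y⁆ - nab ⁅X, Y⁆ Z) := by
        simp only [Rvec, ← hlie]
        abel
    _ = ⁅X, ⁅Y, Z⁆⁆ + ⁅Y, ⁅Z, X⁆⁆ + ⁅Z, ⁅X, Y⁆⁆ := by simp only [hnab.torsion]
    _ = 0 := lie_jacobi X Y Z

variable (hg : IsMetric g)
include hg

theorem g_Rvec_antisymm (X Y U V : 𝔛) : g (Rvec nab X Y U) V = -g (Rvec nab X Y V) U := by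
  have hXY : X (Y (g U V)) = g (nab X (nab Y U)) V + g (nab Y U) (nab X V) +
      (g (nab X U) (nab Y V) + g U (nab X (nab Y V))) := by
    rw [hnab.metric Y U V, map_add, hnab.metric X (nab Y U) V, hnab.metric X U (nab Y V)]
  have hYX : Y (X (g U V)) = g (nab Y (nab X U)) V + g (nab X U) (nab Y V) +
      (g (nab Y U) (nab X V) + g U (nab Y (nab X V))) := by
    rw [hnab.metric X U V, map_add, hnab.metric Y (nab X U) V, hnab.metric Y U (nab X V)]
  have hlie : ⁅X, Y⁆ (g U V) = X (Y (g U V)) - Y (X (g U V)) := Derivation.commutator_apply ..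
  simp only [Rvec, hg.sub_left]
  linear_combination -hXY + hYX + hnab.metric ⁅X, Y⁆ U V - hlie - hg.symm U (nab X (nab Y V)) +
    hg.symm U (nab Y (nab X V)) + hg.symm U (nab ⁅X, Y⁆ V)

theorem g_Rvec_pair_symm (a b c d : 𝔛) : g (Rvec nab a b c) d = g (Rvec nab c d a) b := by
  have hB : ∀ x y z w : 𝔛,
      g (Rvec nab x y z) w + g (Rvec nab y z x) w + g (Rvec nab z x y) w = 0 := by
    intro x y z w
    rw [← hg.add_left, ← hg.add_left, Rvec_bianchi hnab, hg.zero_left]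
  have h1 : ∀ x y z w : 𝔛, g (Rvec nab x y z) w = -g (Rvec nab y x z) w := by
    intro x y z w
    rw [Rvec_antisymm hnab x y z, hg.neg_left]
  have h2 := g_Rvec_antisymm hnab hg
  have S1 := hB b c d a
  have S2 := hB c d a b
  have S3 := hB d a b c
  have S4 := hB a b c d
  rw [h2 b c d a, h2 c d b a, h2 d b c a, h1 d b a c] at S1
  rw [h1 d a c b, h2 a d c b, h2 a c d b] at S2
  rw [h1 d a b c, h2 a b d c] at S3
  rw [h1 c a b d] at S4
  have h : (2 : ℝ) • g (Rvec nab a b c) d = (2 : ℝ) • g (Rvec nab c d a) b := by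
    rw [two_smul, two_smul]
    linear_combination S1 - S2 - S3 + S4
  exact smul_right_injective A two_ne_zero h

end Curvature

section Frame

variable (hnab : IsLeviCivita nab g) (hg : IsMetric g) (he : IsOrthonormalFrame g e)
include hnab hg he

theorem g_nab_frame_antisymm (Y : 𝔛) (i j : Fin n) :
    g (nab Y (e i)) (e j) = -g (nab Y (e j)) (e i) := by
  have hconst : Y (g (e i) (e j)) = 0 := by
    rw [he.orth]
    split_ifs <;> simp
  rw [hnab.metric, hg.symm (e i)] at hconst
  linear_combination hconst

/-- `g (∇_Y eᵢ) eⱼ` is skew in `i, j`, so `∇_Y` can change sides inside a frame trace. -/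
theorem sum_apply_nab_frame {N : Type*} [AddCommGroup N] [Module A N] (B : 𝔛 →ₗ[A] 𝔛 →ₗ[A] N)
    (F : 𝔛 →ₗ[A] 𝔛) (Y : 𝔛) :
    ∑ i, B (F (e i)) (nab Y (e i)) = -∑ i, B (F (nab Y (e i))) (e i) := by
  have h := sum_frame_transpose he.expand (B ∘ₗ F) (v := fun i => nab Y (e i))
    (w := fun j => -nab Y (e j))
    (fun i j => by rw [hg.neg_left]; exact g_nab_frame_antisymm hnab hg he Y i j)
  simpa only [LinearMap.comp_apply, map_neg, LinearMap.neg_apply, Finset.sum_neg_distrib] using h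

theorem sum_apply_nab2_frame {N : Type*} [AddCommGroup N] [Module A N]
    (B : 𝔛 →ₗ[A] 𝔛 →ₗ[A] N) (X Y : 𝔛) :
    ∑ i, (B (nab Y (nab (e i) X)) (e i) + B (nab (e i) X) (nab Y (e i))) =
      ∑ i, B (nab2 nab Y (e i) X) (e i) := by
  have h := sum_apply_nab_frame hnab hg he B (hnab.nabLeft X) Y
  simp only [IsLeviCivita.nabLeft_apply] at h
  rw [Finset.sum_add_distrib, h, ← sub_eq_add_neg, ← Finset.sum_sub_distrib]
  simp only [nab2, map_sub, LinearMap.sub_apply]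

end Frame

section Forms

variable {k : ℕ}

theorem covD_apply (Y : 𝔛) (ω : Forms A k) (Z : Fin k → 𝔛) :
    covD nab Y ω Z = Y (ω Z) - slotDeriv (nab Y) ω Z := rfl

theorem covD_neg (Y : 𝔛) (ω : Forms A k) : covD nab Y (-ω) = -covD nab Y ω := by
  funext Z
  simp only [covD, Pi.neg_apply, map_neg, Finset.sum_neg_distrib, neg_sub_neg, neg_sub]

theorem covD_sum {ι : Type*} (s : Finset ι) (Y : 𝔛) (ω : ι → Forms A k) :
    covD nab Y (∑ i ∈ s, ω i) = ∑ i ∈ s, covD nab Y (ω i) := by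
  funext Z
  simp only [covD, Finset.sum_apply, map_sum, Finset.sum_sub_distrib]
  rw [Finset.sum_comm (s := Finset.univ)]

theorem slotDeriv_cons (F : 𝔛 → 𝔛) (ω : Forms A (k + 1)) (V : 𝔛) (Z : Fin k → 𝔛) :
    slotDeriv F ω (Fin.cons V Z) = contr (F V) ω Z + slotDeriv F (contr V ω) Z := by
  simp only [slotDeriv, contr, Fin.sum_univ_succ, Fin.cons_zero, Fin.cons_succ,
    Fin.update_cons_zero, ← Fin.cons_update]

theorem covD_contr (Y V : 𝔛) (ω : Forms A (k + 1)) :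
    covD nab Y (contr V ω) = contr (nab Y V) ω + contr V (covD nab Y ω) := by
  funext Z
  change covD nab Y (contr V ω) Z = contr (nab Y V) ω Z + covD nab Y ω (Fin.cons V Z)
  rw [covD_apply, covD_apply, slotDeriv_cons]
  simp only [contr]
  abel

theorem contr_apply_eq_consLin (V : 𝔛) (Ω : 𝔛 [⋀^Fin (k + 1)]→ₗ[A] A) (Z : Fin k → 𝔛) :
    contr V ⇑Ω Z = consLin Ω Z V := rfl

theorem codiffS_apply (ω : Forms A (k + 1)) (Z : Fin k → 𝔛) :
    codiffS nab e ω Z = -∑ i, covD nab (e i) ω (Fin.cons (e i) Z) := by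
  simp only [codiffS, Pi.neg_apply, Finset.sum_apply, contr]

theorem apply_eq_slotDeriv_of_covD_eq_zero {ω : Forms A k} {Y : 𝔛} (hω : covD nab Y ω = 0)
    (Z : Fin k → 𝔛) : Y (ω Z) = slotDeriv (nab Y) ω Z :=
  sub_eq_zero.mp (congrFun hω Z)

theorem extd_apply_of_degree_zero (η : Forms A 0) (Z : Fin 1 → 𝔛) :
    extd nab η Z = Z 0 (η Fin.elim0) := by
  rw [extd, Fin.sum_univ_one, covD_apply]
  simp [slotDeriv, Subsingleton.elim (Z ∘ _) Fin.elim0]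

end Forms

section ParallelMultilinear

variable {k : ℕ} {Ω : MultilinearMap A (fun _ : Fin k => Derivation ℝ A A) A}
  (hΩ : ∀ Y, covD nab Y ⇑Ω = 0)
include hΩ

theorem apply_slotDeriv_of_parallel (F : 𝔛 → 𝔛) (Y : 𝔛) (Z : Fin k → 𝔛) :
    Y (slotDeriv F Ω Z) = slotDeriv F (slotDeriv (nab Y) Ω) Z := by
  rw [slotDeriv, map_sum]
  simp only [apply_eq_slotDeriv_of_covD_eq_zero (hΩ Y)]
  rfl

theorem covD_slotDeriv_of_parallel (F : 𝔛 → 𝔛) (Y : 𝔛) :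
    covD nab Y (slotDeriv F Ω) = slotDeriv (fun V => nab Y (F V) - F (nab Y V)) Ω := by
  funext Z
  rw [covD_apply, apply_slotDeriv_of_parallel hΩ, slotDeriv_slotDeriv_sub_comm]

theorem slotDeriv_Rvec_of_parallel (Y W : 𝔛) (Z : Fin k → 𝔛) :
    slotDeriv (Rvec nab Y W) Ω Z = 0 := by
  have hYW : ⁅Y, W⁆ (Ω Z) = slotDeriv (fun V => nab Y (nab W V) - nab W (nab Y V)) Ω Z := by
    rw [Derivation.commutator_apply, apply_eq_slotDeriv_of_covD_eq_zero (hΩ W),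
      apply_eq_slotDeriv_of_covD_eq_zero (hΩ Y), apply_slotDeriv_of_parallel hΩ,
      apply_slotDeriv_of_parallel hΩ, slotDeriv_slotDeriv_sub_comm]
  rw [apply_eq_slotDeriv_of_covD_eq_zero (hΩ _)] at hYW
  change slotDeriv (fun V => (nab Y (nab W V) - nab W (nab Y V)) - nab ⁅Y, W⁆ V) Ω Z = 0
  rw [slotDeriv_sub, ← hYW, sub_self]

end ParallelMultilinear

section Parallel

variable {k : ℕ} {Ω : Derivation ℝ A A [⋀^Fin (k + 1)]→ₗ[A] A} (hΩ : ∀ Y, covD nab Y ⇑Ω = 0)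
include hΩ

theorem covD_contr_of_parallel (Y V : 𝔛) : covD nab Y (contr V ⇑Ω) = contr (nab Y V) ⇑Ω := by
  rw [covD_contr, hΩ]
  exact add_zero _

theorem extd_contr_of_parallel (X : 𝔛) :
    extd nab (contr X ⇑Ω) = slotDeriv (fun V => nab V X) ⇑Ω := by
  funext Z
  simp only [extd, covD_contr_of_parallel hΩ, slotDeriv, map_update_eq_neg_one_pow_mul_cons Ω]
  rfl

theorem covD_extd_contr_of_parallel (X Y : 𝔛) :
    covD nab Y (extd nab (contr X ⇑Ω)) = slotDeriv (fun V => nab2 nab Y V X) ⇑Ω := by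
  rw [extd_contr_of_parallel hΩ]
  exact covD_slotDeriv_of_parallel (Ω := Ω.toMultilinearMap) hΩ _ Y

theorem codiffS_extd_contr_of_parallel (X : 𝔛) (Z : Fin k → 𝔛) :
    codiffS nab e (extd nab (contr X ⇑Ω)) Z =
      contr (roughLap nab e X) ⇑Ω Z -
        ∑ i, slotDeriv (fun V => nab2 nab (e i) V X) (contr (e i) ⇑Ω) Z := by
  simp only [codiffS_apply, covD_extd_contr_of_parallel hΩ, slotDeriv_cons,
    Finset.sum_add_distrib, roughLap]
  rw [contr_apply_eq_consLin, map_neg, map_sum]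
  exact neg_add' _ _

end Parallel

section ParallelCodiff

variable {k : ℕ} {Ω : Derivation ℝ A A [⋀^Fin (k + 2)]→ₗ[A] A} (hΩ : ∀ Y, covD nab Y ⇑Ω = 0)
include hΩ

theorem codiffS_contr_of_parallel (X : 𝔛) :
    codiffS nab e (contr X ⇑Ω) = -∑ i, contr (e i) (contr (nab (e i) X) ⇑Ω) := by
  simp only [codiffS, covD_contr_of_parallel hΩ]

variable (hnab : IsLeviCivita nab g) (hg : IsMetric g) (he : IsOrthonormalFrame g e)
include hnab hg he

theorem covD_codiffS_contr_of_parallel (X Y : 𝔛) (Z : Fin k → 𝔛) :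
    covD nab Y (codiffS nab e (contr X ⇑Ω)) Z =
      -∑ i, Ω (Fin.cons (nab2 nab Y (e i) X) (Fin.cons (e i) Z)) := by
  have hB : ∀ u v, consUpdateBilin Ω (Fin.cons 0 Z) 0 u v = Ω (Fin.cons u (Fin.cons v Z)) :=
    fun u v => by simp only [consUpdateBilin, LinearMap.mk₂_apply, Fin.update_cons_zero]
  rw [codiffS_contr_of_parallel hΩ, covD_neg, covD_sum]
  simp only [covD_contr, covD_contr_of_parallel hΩ, Pi.neg_apply, Finset.sum_apply, Pi.add_apply]
  have h := sum_apply_nab2_frame hnab hg he (consUpdateBilin Ω (Fin.cons 0 Z) 0) X Y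
  simp only [hB] at h
  rw [← h]
  exact congrArg Neg.neg (Finset.sum_congr rfl fun i _ => add_comm _ _)

theorem extd_codiffS_contr_of_parallel (X : 𝔛) (Z : Fin (k + 1) → 𝔛) :
    extd nab (codiffS nab e (contr X ⇑Ω)) Z =
      ∑ i, slotDeriv (fun V => nab2 nab V (e i) X) (contr (e i) ⇑Ω) Z := by
  have hmove : ∀ i m w, contr (e i) ⇑Ω (update Z m w) =
      (-1) ^ (m : ℕ) * Ω (Fin.cons (e i) (Fin.cons w (Z ∘ m.succAbove))) :=
    fun i => map_update_eq_neg_one_pow_mul_cons (Ω.curryLeft (e i)) Z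
  simp only [extd, covD_codiffS_contr_of_parallel hΩ hnab hg he, slotDeriv, hmove,
    map_cons_cons_swap Ω _ (e _), mul_neg, Finset.mul_sum, Finset.sum_neg_distrib]
  exact congrArg Neg.neg Finset.sum_comm

end ParallelCodiff

section HodgeContr

variable (hnab : IsLeviCivita nab g) (hg : IsMetric g) (he : IsOrthonormalFrame g e)
  {k : ℕ} {Ω : Derivation ℝ A A [⋀^Fin (k + 1)]→ₗ[A] A} (hΩ : ∀ Y, covD nab Y ⇑Ω = 0)
include hnab hg he hΩ

theorem hodgeLap_contr_apply_of_parallel (X : 𝔛) (Z : Fin k → 𝔛) :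
    hodgeLap nab e (contr X ⇑Ω) Z = contr (roughLap nab e X) ⇑Ω Z +
      ∑ i, slotDeriv (fun V => Rvec nab V (e i) X) (contr (e i) ⇑Ω) Z := by
  cases k with
  | zero =>
    show codiffS nab e (extd nab (contr X ⇑Ω)) Z = _
    simp only [codiffS_extd_contr_of_parallel hΩ, slotDeriv, Finset.univ_eq_empty,
      Finset.sum_empty, Finset.sum_const_zero, sub_zero, add_zero]
  | succ k =>
    show codiffS nab e (extd nab (contr X ⇑Ω)) Z + extd nab (codiffS nab e (contr X ⇑Ω)) Z = _
    have hR : ∀ i, slotDeriv (fun V => nab2 nab V (e i) X) (contr (e i) ⇑Ω) Z -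
        slotDeriv (fun V => nab2 nab (e i) V X) (contr (e i) ⇑Ω) Z =
          slotDeriv (fun V => Rvec nab V (e i) X) (contr (e i) ⇑Ω) Z := fun i => by
      have h := slotDeriv_sub (Ω.curryLeft (e i)).toMultilinearMap
        (fun V => nab2 nab V (e i) X) (fun V => nab2 nab (e i) V X) Z
      simp only [nab2_sub_nab2_swap hnab] at h
      exact h.symm
    rw [codiffS_extd_contr_of_parallel hΩ, extd_codiffS_contr_of_parallel hΩ hnab hg he,
      ← Finset.sum_congr rfl fun i _ => hR i, Finset.sum_sub_distrib]
    abel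

theorem sum_slotDeriv_Rvec_contr_of_parallel (X : 𝔛) (Z : Fin k → 𝔛) :
    ∑ i, slotDeriv (fun V => Rvec nab V (e i) X) (contr (e i) ⇑Ω) Z =
      contr (ricci nab e X) ⇑Ω Z := by
  calc ∑ i, slotDeriv (fun V => Rvec nab V (e i) X) (contr (e i) ⇑Ω) Z
      = ∑ m, ∑ i, consUpdateBilin Ω Z m (e i) (Rvec nab (Z m) (e i) X) := by
        simp only [slotDeriv]
        exact Finset.sum_comm
    _ = ∑ m, ∑ j, consUpdateBilin Ω Z m (Rvec nab X (e j) (Z m)) (e j) :=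
        Finset.sum_congr rfl fun m _ =>
          sum_frame_transpose he.expand _ fun i j => g_Rvec_pair_symm hnab hg _ _ _ _
    _ = ∑ j, -slotDeriv (Rvec nab X (e j)) (contr (e j) ⇑Ω) Z := by
        rw [Finset.sum_comm]
        refine Finset.sum_congr rfl fun j _ => ?_
        rw [slotDeriv, ← Finset.sum_neg_distrib]
        exact Finset.sum_congr rfl fun m _ => map_cons_update_swap Ω Z m _ _
    _ = ∑ j, contr (Rvec nab X (e j) (e j)) ⇑Ω Z := by
        refine Finset.sum_congr rfl fun j _ => neg_eq_of_add_eq_zero_left ?_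
        have h :=
          slotDeriv_Rvec_of_parallel (Ω := Ω.toMultilinearMap) hΩ X (e j) (Fin.cons (e j) Z)
        rw [slotDeriv_cons] at h
        exact h
    _ = contr (ricci nab e X) ⇑Ω Z := by
        rw [ricci, contr_apply_eq_consLin, map_sum]
        rfl

theorem hodgeLap_contr_of_parallel (X : 𝔛) :
    hodgeLap nab e (contr X ⇑Ω) = contr (roughLap nab e X + ricci nab e X) ⇑Ω := by
  funext Z
  rw [hodgeLap_contr_apply_of_parallel hnab hg he hΩ,
    sum_slotDeriv_Rvec_contr_of_parallel hnab hg he hΩ]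
  simp only [contr_apply_eq_consLin, map_add]

end HodgeContr

section Flat

variable (hnab : IsLeviCivita nab g)
include hnab

theorem covD_flat (X Y : 𝔛) : covD nab Y (flat g X) = flat g (nab Y X) := by
  funext Z
  simp only [covD, flat, Fin.sum_univ_one, update_self, hnab.metric]
  ring

theorem extd_flat_apply (X : 𝔛) (Z : Fin 2 → 𝔛) :
    extd nab (flat g X) Z = g (nab (Z 0) X) (Z 1) - g (nab (Z 1) X) (Z 0) := by
  rw [extd, Fin.sum_univ_two]
  simp only [covD_flat hnab, flat]
  norm_num [sub_eq_add_neg]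

variable (hg : IsMetric g)
include hg

theorem covD_extd_flat_apply (X Y : 𝔛) (Z : Fin 2 → 𝔛) :
    covD nab Y (extd nab (flat g X)) Z =
      g (nab2 nab Y (Z 0) X) (Z 1) - g (nab2 nab Y (Z 1) X) (Z 0) := by
  rw [covD_apply, slotDeriv, Fin.sum_univ_two]
  simp only [extd_flat_apply hnab, update_self, update_of_ne zero_ne_one,
    update_of_ne one_ne_zero, map_sub, hnab.metric, nab2, hg.sub_left]
  ring

theorem codiffS_extd_flat_apply (X : 𝔛) (Z : Fin 1 → 𝔛) :
    codiffS nab e (extd nab (flat g X)) Z =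
      g (roughLap nab e X) (Z 0) + ∑ i, g (nab2 nab (e i) (Z 0) X) (e i) := by
  simp only [codiffS_apply, covD_extd_flat_apply hnab hg, Fin.cons_zero, Fin.cons_one, roughLap,
    hg.neg_left, hg.sum_left, Finset.sum_sub_distrib]
  ring

variable (he : IsOrthonormalFrame g e)
include he

theorem extd_codiffS_flat_apply (X : 𝔛) (Z : Fin 1 → 𝔛) :
    extd nab (codiffS nab e (flat g X)) Z = -∑ i, g (nab2 nab (Z 0) (e i) X) (e i) := by
  have h := sum_apply_nab2_frame hnab hg he hg.bilin X (Z 0)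
  simp only [IsMetric.bilin, LinearMap.mk₂_apply] at h
  simp only [extd_apply_of_degree_zero, codiffS_apply, covD_flat hnab, flat, Fin.cons_zero,
    map_neg, map_sum, hnab.metric, h]

theorem hodgeLap_flat (X : 𝔛) :
    hodgeLap nab e (flat g X) = flat g (roughLap nab e X + ricci nab e X) := by
  funext Z
  show codiffS nab e (extd nab (flat g X)) Z + extd nab (codiffS nab e (flat g X)) Z = _
  have hR : ∀ i, g (nab2 nab (e i) (Z 0) X) (e i) - g (nab2 nab (Z 0) (e i) X) (e i) =
      g (Rvec nab X (e i) (e i)) (Z 0) := fun i => by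
    rw [← hg.sub_left, nab2_sub_nab2_swap hnab, g_Rvec_pair_symm hnab hg]
  rw [codiffS_extd_flat_apply hnab hg, extd_codiffS_flat_apply hnab hg he, flat, hg.add_left,
    ricci, hg.sum_left, ← Finset.sum_congr rfl fun i _ => hR i, Finset.sum_sub_distrib]
  ring

end Flat

theorem sharp_flat (he : IsOrthonormalFrame g e) (X : 𝔛) : sharp e (flat g X) = X :=
  (he.expand X).symm

theorem hodgeLap_contract_parallel_general
    -- the metric
    (hg_symm : ∀ X Y : Derivation ℝ A A, g X Y = g Y X)
    (hg_add : ∀ X Y Z : Derivation ℝ A A, g (X + Y) Z = g X Z + g Y Z)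
    (hg_smul : ∀ (a : A) (X Y : Derivation ℝ A A), g (a • X) Y = a * g X Y)
    -- the Levi-Civita connection
    (hnab_add₁ : ∀ X Y Z : Derivation ℝ A A, nab (X + Y) Z = nab X Z + nab Y Z)
    (hnab_smul₁ : ∀ (a : A) (X Y : Derivation ℝ A A), nab (a • X) Y = a • nab X Y)
    (hnab_add₂ : ∀ X Y Z : Derivation ℝ A A, nab X (Y + Z) = nab X Y + nab X Z)
    (hnab_metric : ∀ X Y Z : Derivation ℝ A A,
      X (g Y Z) = g (nab X Y) Z + g Y (nab X Z))
    (hnab_torsion : ∀ X Y : Derivation ℝ A A, nab X Y - nab Y X = ⁅X, Y⁆)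
    -- the orthonormal frame
    (he_orth : ∀ i j, g (e i) (e j) = if i = j then 1 else 0)
    (he_expand : ∀ X : Derivation ℝ A A, X = ∑ i, g X (e i) • e i)
    -- a parallel `p`-form, `p ≥ 1` (degree `p + 1` below)
    (p : ℕ) (ω : Forms A (p + 1))
    (hω_add : ∀ (Z : Fin (p + 1) → Derivation ℝ A A) (i : Fin (p + 1))
      (x y : Derivation ℝ A A),
      ω (Function.update Z i (x + y)) =
        ω (Function.update Z i x) + ω (Function.update Z i y))
    (hω_smul : ∀ (Z : Fin (p + 1) → Derivation ℝ A A) (i : Fin (p + 1))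
      (a : A) (x : Derivation ℝ A A),
      ω (Function.update Z i (a • x)) = a * ω (Function.update Z i x))
    (hω_alt : ∀ (Z : Fin (p + 1) → Derivation ℝ A A) (i j : Fin (p + 1)),
      i ≠ j → Z i = Z j → ω Z = 0)
    (hω_par : ∀ Y : Derivation ℝ A A, covD nab Y ω = 0)
    (X : Derivation ℝ A A) :
    hodgeLap nab e (contr X ω) =
      contr (sharp e (hodgeLap nab e (flat g X))) ω := by
  have hnab : IsLeviCivita nab g :=
    ⟨hnab_add₁, hnab_smul₁, hnab_add₂, hnab_metric, hnab_torsion⟩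
  have hg : IsMetric g := ⟨hg_symm, hg_add, hg_smul⟩
  have he : IsOrthonormalFrame g e := ⟨he_orth, he_expand⟩
  -- `convert` matches the `DecidableEq` instance chosen by `AlternatingMap` with the one in `hω_*`
  let Ω : Derivation ℝ A A [⋀^Fin (p + 1)]→ₗ[A] A :=
    { toFun := ω
      map_update_add' := fun Z i x y => by convert hω_add Z i x y
      map_update_smul' := fun Z i a x => by rw [smul_eq_mul]; convert hω_smul Z i a x
      map_eq_zero_of_eq' := fun Z i j hZ hij => hω_alt Z i j hij hZ }
  rw [hodgeLap_flat hnab hg he, sharp_flat he]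
  exact hodgeLap_contr_of_parallel hnab hg he (Ω := Ω) hω_par X

/-- Corollary 2.6 (ii): for a vector field `X` and a *parallel* `p`-form `ω`
(`p ≥ 1`, here of degree `p + 1`), the Hodge Laplacian `Δ = d d* + d* d`
satisfies `Δ(ι(X)ω) = ι(ΔX)ω`, where `X` is identified with its metric-dual
`1`-form `X♭` and `ΔX` denotes the vector field dual to `Δ(X♭)`. -/
theorem hodgeLap_contract_parallel
    -- the metric
    (hg_symm : ∀ X Y : Derivation ℝ A A, g X Y = g Y X)
    (hg_add : ∀ X Y Z : Derivation ℝ A A, g (X + Y) Z = g X Z + g Y Z)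
    (hg_smul : ∀ (a : A) (X Y : Derivation ℝ A A), g (a • X) Y = a * g X Y)
    -- the Levi-Civita connection
    (hnab_add₁ : ∀ X Y Z : Derivation ℝ A A, nab (X + Y) Z = nab X Z + nab Y Z)
    (hnab_smul₁ : ∀ (a : A) (X Y : Derivation ℝ A A), nab (a • X) Y = a • nab X Y)
    (hnab_add₂ : ∀ X Y Z : Derivation ℝ A A, nab X (Y + Z) = nab X Y + nab X Z)
    (hnab_leibniz : ∀ (a : A) (X Y : Derivation ℝ A A),
      nab X (a • Y) = X a • Y + a • nab X Y)
    (hnab_metric : ∀ X Y Z : Derivation ℝ A A,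
      X (g Y Z) = g (nab X Y) Z + g Y (nab X Z))
    (hnab_torsion : ∀ X Y : Derivation ℝ A A, nab X Y - nab Y X = ⁅X, Y⁆)
    -- the orthonormal frame
    (he_orth : ∀ i j, g (e i) (e j) = if i = j then 1 else 0)
    (he_expand : ∀ X : Derivation ℝ A A, X = ∑ i, g X (e i) • e i)
    -- a parallel `p`-form, `p ≥ 1` (degree `p + 1` below)
    (p : ℕ) (ω : Forms A (p + 1))
    (hω_add : ∀ (Z : Fin (p + 1) → Derivation ℝ A A) (i : Fin (p + 1))
      (x y : Derivation ℝ A A),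
      ω (Function.update Z i (x + y)) =
        ω (Function.update Z i x) + ω (Function.update Z i y))
    (hω_smul : ∀ (Z : Fin (p + 1) → Derivation ℝ A A) (i : Fin (p + 1))
      (a : A) (x : Derivation ℝ A A),
      ω (Function.update Z i (a • x)) = a * ω (Function.update Z i x))
    (hω_alt : ∀ (Z : Fin (p + 1) → Derivation ℝ A A) (i j : Fin (p + 1)),
      i ≠ j → Z i = Z j → ω Z = 0)
    (hω_par : ∀ Y : Derivation ℝ A A, covD nab Y ω = 0)
    (X : Derivation ℝ A A) :
    hodgeLap nab e (contr X ω) =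
      contr (sharp e (hodgeLap nab e (flat g X))) ω :=
  hodgeLap_contract_parallel_general hg_symm hg_add hg_smul hnab_add₁ hnab_smul₁ hnab_add₂
    hnab_metric hnab_torsion he_orth he_expand p ω hω_add hω_smul hω_alt hω_par X

end RiemannModel
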